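/- arXiv:2507.12925 — 2 statements merged into one kernel-verified Lean document; each statement's English description precedes it below -/
import Mathlib

section
/- For every ordered spanning tree T of G and every finite list 𝔼 of edges of G, IM-BFS(T, 𝔼) is an ordered spanning tree of the graph on V whose edge set consists of the tree edges (P(v), v) of T with P(v) ≠ r together with the edges occurring in 𝔼, and it is a BFS-tree of that graph. -/
namespace BFSFormal

variable {V : Type} [Fintype V] [DecidableEq V]

/-- An ordered rooted tree structure on `V ∪ {r}`, where the dummy root `r`
is represented by `none`.  `parent v = none` means the parent of `v` is `r`;
`children w` lists the children of `w` in sibling order. -/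
structure PreTree (V : Type) where
  parent : V → Option V
  children : Option V → List V

/-- One step of the parent function, with `r` (= `none`) absorbing. -/
def parentStep (T : PreTree V) : Option V → Option V
  | none => none
  | some v => T.parent v

/-- `T` is an ordered spanning tree of the directed graph on `V` with edge set `E`
(augmented with the dummy root `r`): iterating the parent function from any node
reaches `r`; every tree edge `(P v, v)` with `P v ≠ r` lies in `E`; and the
children lists give, without repetition, exactly the children of each node. -/
def IsOST (E : Finset (V × V)) (T : PreTree V) : Prop :=
  (∀ v : V, ∃ k : ℕ, (parentStep T)^[k] (some v) = none) ∧
  (∀ v u : V, T.parent v = some u → (u, v) ∈ E) ∧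
  (∀ w : Option V, (T.children w).Nodup) ∧
  (∀ (w : Option V) (v : V), v ∈ T.children w ↔ T.parent v = w)

/-- Replace each node of a list by its list of children (used to pass from one
level of a subtree to the next, keeping the sibling orders). -/
def expand (T : PreTree V) (L : List V) : List V :=
  L.flatMap fun v => T.children (some v)

/-- The breadth-first listing of the nodes of `T`: for each child `c` of the root `r`
in sibling order, all nodes of the subtree rooted at `c` are listed, in level
(breadth-first) order determined by the sibling orders, before the subtree of any
later child of `r`. -/
def bfoList (T : PreTree V) : List V :=
  (T.children none).flatMap fun c =>
    (List.range (Fintype.card V + 1)).flatMap fun k => (expand T)^[k] [c]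

/-- The breadth-first order of a node of `V` on `T` (the root `r` gets `0`,
the nodes of `V` get `1, …, n` in the order of `bfoList`). -/
def bfo (T : PreTree V) (v : V) : ℕ := (bfoList T).idxOf v + 1

/-- Breadth-first order extended to `V ∪ {r}`, with `bfo r = 0`. -/
def bfoOpt (T : PreTree V) : Option V → ℕ
  | none => 0
  | some v => bfo T v

/-- `(u, v)` is a V-BFS edge with respect to `T`:
`bfo u < bfo v`, `P v ≠ r`, and `bfo u < bfo (P v)`. -/
def IsVBFS (T : PreTree V) (e : V × V) : Prop :=
  bfo T e.1 < bfo T e.2 ∧ T.parent e.2 ≠ none ∧ bfo T e.1 < bfoOpt T (T.parent e.2)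

instance (T : PreTree V) (e : V × V) : Decidable (IsVBFS T e) := by
  unfold IsVBFS; infer_instance

/-- `T` is a BFS-tree of the graph with edge set `E` : it is an ordered spanning
tree of that graph and no edge of `E` is a V-BFS edge with respect to `T`. -/
def IsBFSTree (E : Finset (V × V)) (T : PreTree V) : Prop :=
  IsOST E T ∧ ∀ e ∈ E, ¬ IsVBFS T e

/-- `LLSP E` : the number of edges of a longest simple directed path of the graph
with edge set `E`. -/
noncomputable def LLSP (E : Finset (V × V)) : ℕ :=
  sSup {k : ℕ | ∃ p : List V, p.Nodup ∧ p.Chain' (fun a b => (a, b) ∈ E) ∧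
    p.length = k + 1}

/-- `EL` is an enumeration `e₁, …, e_m` of the edge set `E`. -/
def IsEnum (E : Finset (V × V)) (EL : List (V × V)) : Prop :=
  EL.Nodup ∧ ∀ e : V × V, e ∈ EL ↔ e ∈ E

/-- The initial ordered spanning tree of EE-BFS / EB-BFS: every node of `V` is a
child of `r`, in a fixed sibling order. -/
def IsInitTree (T : PreTree V) : Prop :=
  (∀ v : V, T.parent v = none) ∧ (T.children none).Nodup ∧
  (∀ v : V, v ∈ T.children none) ∧ (∀ v : V, T.children (some v) = [])

/-- Restructuring step of EE-BFS: make `v` the rightmost child of `u` (the parent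
of `v` becomes `u` and `v` is placed last in the sibling order of the children of
`u`), all other parents and sibling orders being unchanged. -/
def restructure (T : PreTree V) (u v : V) : PreTree V where
  parent w := if w = v then some u else T.parent w
  children w :=
    if w = some u then (T.children (some u)).erase v ++ [v]
    else (T.children w).erase v

/-- Scanning a list of edges, EE-BFS style: each scanned edge that is a V-BFS edge
with respect to the current tree triggers a restructuring. -/
def EEscan (EL : List (V × V)) (T : PreTree V) : PreTree V :=
  EL.foldl (fun Tc e => if IsVBFS Tc e then restructure Tc e.1 e.2 else Tc) T

/-- One pass of EE-BFS over the fixed enumeration `EL` of `E`. -/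
def EEstep (EL : List (V × V)) (T : PreTree V) : PreTree V := EEscan EL T

/- ------------------  IM-BFS  ------------------ -/

/-- State of the deterministic BFS of IM-BFS: the FIFO queue, the set of nodes
already enqueued (adopted), and the adoption records `(new parent, child)` in
adoption order. -/
structure BFSState (V : Type) where
  queue : List V
  marked : Finset V
  adopts : List (Option V × V)

/-- Enqueue, with prospective parent `p`, the candidates in order; a node already
enqueued before is ignored (it was adopted the first time it was enqueued). -/
def enq (p : Option V) (cands : List V) (s : BFSState V) : BFSState V :=
  cands.foldl
    (fun s c =>
      if c ∈ s.marked then s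
      else ⟨s.queue ++ [c], insert c s.marked, s.adopts ++ [(p, c)]⟩) s

/-- The main loop of IM-BFS (fuel-based).  When the queue is nonempty, the first
node `u` is dequeued and visited: the children of `u` in `T` (in sibling order)
and then the targets of the edges of `EL` with source `u` (in list order) are
enqueued.  When the queue is empty, the earliest (in sibling order) not yet
enqueued child of `r` in `T` is enqueued with parent `r`; if all nodes have been
enqueued the adoption records are returned. -/
noncomputable def imBFSAux (T : PreTree V) (EL : List (V × V)) :
    ℕ → BFSState V → List (Option V × V)
  | 0, s => s.adopts
  | fuel + 1, s =>
    match s.queue with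
    | u :: rest =>
        let cands := T.children (some u) ++
          (EL.filter fun e => decide (e.1 = u)).map Prod.snd
        imBFSAux T EL fuel (enq (some u) cands ⟨rest, s.marked, s.adopts⟩)
    | [] =>
        match (T.children none).find? (fun c => decide (c ∉ s.marked)) with
        | some c => imBFSAux T EL fuel (enq none [c] s)
        | none =>
            match (Finset.univ : Finset V).toList.find?
                (fun v => decide (v ∉ s.marked)) with
            | some v => imBFSAux T EL fuel (enq none [v] s)
            | none => s.adopts

/-- `imBFS T EL` : the ordered spanning tree produced by the deterministic
breadth-first search, started at `r`, of the graph whose edges are the tree edges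
of `T` together with the edges occurring in the list `EL` (Stipulation 1):
each node's new parent is the node during whose processing it was first enqueued,
and the children of each node are ordered by adoption time. -/
noncomputable def imBFS (T : PreTree V) (EL : List (V × V)) : PreTree V :=
  let ad := imBFSAux T EL (2 * Fintype.card V + 1) ⟨[], ∅, []⟩
  { parent := fun v =>
      match ad.find? (fun pc => decide (pc.2 = v)) with
      | some pc => pc.1
      | none => none
    children := fun w => (ad.filter fun pc => decide (pc.1 = w)).map Prod.snd }

/-- The set of tree edges `(P v, v)` of `T` with `P v ≠ r`. -/
def treeEdges (T : PreTree V) : Finset (V × V) :=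
  Finset.univ.filter fun e : V × V => T.parent e.2 = some e.1

/- ------------------  EB-BFS  ------------------ -/

/-- One pass of EB-BFS (also the map `RE(𝔼₁, …, 𝔼_k)`): replace the current tree
`T` by `IM-BFS(T, 𝔼)` successively for each batch `𝔼`. -/
noncomputable def EBstep (batches : List (List (V × V))) (T : PreTree V) : PreTree V :=
  batches.foldl imBFS T

/-- The pass of EB-BFS over `batches` starting from `T` is one during which every
batch replacement leaves the edge set of the tree unchanged. -/
def CleanPass (batches : List (List (V × V))) (T : PreTree V) : Prop :=
  ∀ j < batches.length,
    (imBFS ((batches.take j).foldl imBFS T) (batches.getD j [])).parent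
      = ((batches.take j).foldl imBFS T).parent

/- ------------------  the sublist S(T, 𝔼)  ------------------ -/

/-- `S T EL` : if `EL` contains no V-BFS edge w.r.t. `T`, the empty list; otherwise,
letting `e₁ = (u₁, v₁)` be the earliest V-BFS edge of `EL` whose tail has minimal
breadth-first order among tails of V-BFS edges of `EL`, the sublist of `EL` (in the
same order) of the edges `(u, v)` at the position of `e₁` or later with
`u ≠ P(v)`, `bfo u ≥ bfo u₁` and `bfo v ≥ bfo u₁`. -/
def S (T : PreTree V) (EL : List (V × V)) : List (V × V) :=
  let vb := EL.filter fun e => decide (IsVBFS T e)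
  match (vb.map fun e => bfo T e.1).min? with
  | none => []
  | some b =>
      (EL.dropWhile fun e => !(decide (IsVBFS T e) && decide (bfo T e.1 = b))).filter
        fun e => decide (T.parent e.2 ≠ some e.1) && decide (b ≤ bfo T e.1)
          && decide (b ≤ bfo T e.2)

/-- The map sending `T` to `T_{k+1}` where `T₁ = T`, `S_j = S(T_j, E_j)` and
`T_{j+1} = IM-BFS(T_j, S_j)` (i.e. `RE(S₁, …, S_k)` with the `S`-lists recomputed
from the successively current trees). -/
noncomputable def reSstep (batches : List (List (V × V))) (T : PreTree V) : PreTree V :=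
  batches.foldl (fun Tc EL => imBFS Tc (S Tc EL)) T

/-- The list `[S₁, …, S_k]` of the sublists computed along the run
`T₁ = T`, `S_j = S(T_j, E_j)`, `T_{j+1} = IM-BFS(T_j, S_j)`. -/
noncomputable def runS (batches : List (List (V × V))) (T : PreTree V) : List (List (V × V)) :=
  (List.range batches.length).map fun j =>
    S (reSstep (batches.take j) T) (batches.getD j [])

/- ------------------  depth and depth'  ------------------ -/

/-- The depth of `v` in `T`: the number of tree edges on the path from `r` to `v`. -/
noncomputable def depth (T : PreTree V) (v : V) : ℕ :=
  sInf {k : ℕ | (parentStep T)^[k] (some v) = none}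

/-- The topmost proper ancestor of `v` (the child of `r` whose subtree contains `v`). -/
noncomputable def topAnc (T : PreTree V) (v : V) : Option V :=
  (parentStep T)^[depth T v - 1] (some v)

/-- `d(T_c)` : the maximum depth in `T` of a node of the subtree of `T` rooted at
the child `c` of `r`. -/
noncomputable def subtreeMaxDepth (T : PreTree V) (c : V) : ℕ :=
  Finset.univ.sup fun u : V => if topAnc T u = some c then depth T u else 0

/-- `depth′(v, T) = Σ_{1 ≤ l ≤ j−1} d(T_l) + depth(v, T)` where `v` belongs to the
subtree `T_j` of the `j`-th child of `r` in sibling order. -/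
noncomputable def depth' (T : PreTree V) (v : V) : ℕ :=
  match topAnc T v with
  | none => depth T v
  | some c =>
      (((T.children none).takeWhile fun x => decide (x ≠ c)).map
        (subtreeMaxDepth T)).sum + depth T v

/- ------------------  node removal (statements 13, 14)  ------------------ -/

/-- The edge set of the induced subgraph `G − u`, on the subtype `{v // v ≠ u}`. -/
def Esub (E : Finset (V × V)) (u : V) :
    Finset ({v : V // v ≠ u} × {v : V // v ≠ u}) :=
  Finset.univ.filter fun e => ((e.1 : V), (e.2 : V)) ∈ E

/-- Extend an ordered spanning tree `T'` of `G − u` to one of `G` by adding `u`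
as the rightmost child of `r`. -/
def extendRight (u : V) (T' : PreTree {v : V // v ≠ u}) : PreTree V where
  parent v := if h : v = u then none else (T'.parent ⟨v, h⟩).map Subtype.val
  children w :=
    match w with
    | none => (T'.children none).map Subtype.val ++ [u]
    | some x =>
        if hx : x = u then []
        else (T'.children (some ⟨x, hx⟩)).map Subtype.val

/-- Extend an ordered spanning tree `T'` of `G − u` to one of `G` by adding `u`
as the leftmost child of `r`. -/
def extendLeft (u : V) (T' : PreTree {v : V // v ≠ u}) : PreTree V where
  parent v := if h : v = u then none else (T'.parent ⟨v, h⟩).map Subtype.val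
  children w :=
    match w with
    | none => u :: (T'.children none).map Subtype.val
    | some x =>
        if hx : x = u then []
        else (T'.children (some ⟨x, hx⟩)).map Subtype.val


/-!
IM-BFS records its adoptions as pairs (new parent, child) in adoption order, and its output tree
is read off this list. Because the queue is FIFO, nodes are dequeued in adoption order, so
positions in the list act as time stamps. An invariant of the loop shows that every parent is
adopted before its child, so the output is a spanning tree of the new graph, and that the parent of
a node is the first dequeued node offering it, so for every edge `(u, v)` of the new graph `P v` is
dequeued no later than `u`. Finally, a FIFO queue lists each phase of the search in level order,
so the breadth-first order of the output tree is the adoption order, and the last property says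
that no edge is a V-BFS edge.
-/

theorem idxOf_lt_idxOf_of_nodup_append {α : Type} [DecidableEq α] {l₁ l₂ : List α}
    {a b : α} (h : (l₁ ++ l₂).Nodup) (ha : a ∈ l₁) (hb : b ∈ l₂) :
    (l₁ ++ l₂).idxOf a < (l₁ ++ l₂).idxOf b := by
  rw [List.idxOf_append_of_mem ha,
    List.idxOf_append_of_notMem fun hb' => List.disjoint_of_nodup_append h hb' hb]
  exact (List.idxOf_lt_length_iff.2 ha).trans_le (Nat.le_add_right _ _)

section LevelOrder

variable {V : Type} (T : PreTree V)

def levels (N : ℕ) (Q : List V) : List V :=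
  (List.range N).flatMap fun k => (expand T)^[k] Q

theorem expand_append (A B : List V) : expand T (A ++ B) = expand T A ++ expand T B :=
  List.flatMap_append

theorem expand_cons (a : V) (Q : List V) : expand T (a :: Q) = T.children (some a) ++ expand T Q :=
  List.flatMap_cons

theorem iterate_expand_nil (k : ℕ) : (expand T)^[k] [] = [] :=
  Function.iterate_fixed rfl k

theorem levels_nil (N : ℕ) : levels T N [] = [] := by
  simp [levels, iterate_expand_nil]

theorem levels_succ (N : ℕ) (Q : List V) : levels T (N + 1) Q = Q ++ levels T N (expand T Q) := by
  simp only [levels, List.range_succ_eq_map, List.flatMap_cons, Function.iterate_zero_apply,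
    List.flatMap_map, Function.iterate_succ_apply]

/-- A FIFO queue lists the nodes in level order. -/
theorem levels_append_of_iterate_eq_nil (N : ℕ) (A B : List V) (hA : (expand T)^[N] A = []) :
    levels T (N + 1) (A ++ B) = A ++ levels T (N + 1) (B ++ expand T A) := by
  induction N generalizing A B with
  | zero =>
    obtain rfl : A = [] := hA
    simp [levels, expand]
  | succ N ih =>
    rw [levels_succ, levels_succ T (N + 1) (B ++ _), expand_append, expand_append,
      ih (expand T A) (expand T B) hA]
    simp

theorem iterate_expand_eq_nil (ρ : V → ℕ) (n : ℕ)
    (hρ : ∀ u v, v ∈ T.children (some u) → ρ u < ρ v) (hn : ∀ v, ρ v < n) (Q : List V) :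
    (expand T)^[n] Q = [] := by
  have hdeep : ∀ k, ∀ v ∈ (expand T)^[k] Q, k ≤ ρ v := by
    intro k
    induction k with
    | zero => simp
    | succ k ih =>
      intro v hv
      rw [Function.iterate_succ_apply', expand, List.mem_flatMap] at hv
      obtain ⟨u, hu, hv⟩ := hv
      exact (ih u hu).trans_lt (hρ u v hv)
  exact List.eq_nil_iff_forall_not_mem.2 fun v hv => (hdeep n v hv).not_gt (hn v)

end LevelOrder

theorem exists_iterate_parentStep_eq_none {V : Type} (R : PreTree V) (ρ : V → ℕ)
    (hρ : ∀ u v, R.parent v = some u → ρ u < ρ v) (v : V) :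
    ∃ k, (parentStep R)^[k] (some v) = none := by
  induction h : ρ v using Nat.strong_induction_on generalizing v with
  | _ n ih =>
    cases hp : R.parent v with
    | none => exact ⟨1, hp⟩
    | some u =>
      obtain ⟨k, hk⟩ := ih (ρ u) (h ▸ hρ u v hp) u rfl
      exact ⟨k + 1, by rwa [Function.iterate_succ_apply, parentStep, hp]⟩

theorem mem_append_map_some_iff {V : Type} {ad : List (Option V × V)} {F : List V} {u p v : V} :
    (some p, v) ∈ ad ++ F.map (some u, ·) ↔ (some p, v) ∈ ad ∨ p = u ∧ v ∈ F := by
  simp [eq_comm, and_comm]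

section AdoptionRecords

variable {V : Type} [DecidableEq V]

def ofAdopts (A : List (Option V × V)) : PreTree V where
  parent v :=
    match A.find? (fun pc => decide (pc.2 = v)) with
    | some pc => pc.1
    | none => none
  children w := (A.filter fun pc => decide (pc.1 = w)).map Prod.snd

theorem mem_ofAdopts_children {A : List (Option V × V)} {w : Option V} {v : V} :
    v ∈ (ofAdopts A).children w ↔ (w, v) ∈ A := by
  simp [ofAdopts, and_comm, eq_comm]

theorem ofAdopts_children_append (A B : List (Option V × V)) (w : Option V) :
    (ofAdopts (A ++ B)).children w = (ofAdopts A).children w ++ (ofAdopts B).children w := by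
  simp [ofAdopts]

theorem ofAdopts_parent_of_mem {A : List (Option V × V)} (hA : (A.map Prod.snd).Nodup)
    {p : Option V} {v : V} (hpv : (p, v) ∈ A) : (ofAdopts A).parent v = p := by
  obtain ⟨pc, hpc⟩ : ∃ pc, A.find? (fun pc => decide (pc.2 = v)) = some pc :=
    Option.isSome_iff_exists.1 (List.find?_isSome.2 ⟨_, hpv, by simp⟩)
  have hsnd : pc.2 = v := by simpa using List.find?_some hpc
  have : pc = (p, v) := List.inj_on_of_nodup_map hA (List.mem_of_find?_eq_some hpc) hpv hsnd
  simp [ofAdopts, hpc, this]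

theorem exists_enq_eq (p : Option V) (cs : List V) (s : BFSState V) :
    ∃ F : List V, F.Nodup ∧ (∀ x, x ∈ F ↔ x ∈ cs ∧ x ∉ s.marked) ∧
      enq p cs s = ⟨s.queue ++ F, s.marked ∪ F.toFinset, s.adopts ++ F.map (p, ·)⟩ := by
  induction cs generalizing s with
  | nil => exact ⟨[], List.nodup_nil, by simp, by simp [enq]⟩
  | cons c cs ih =>
    by_cases hc : c ∈ s.marked
    · obtain ⟨F, hF, hmem, heq⟩ := ih s
      refine ⟨F, hF, fun x => ?_, by simpa [enq, hc] using heq⟩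
      rw [hmem, List.mem_cons]
      constructor
      · exact fun h => ⟨Or.inr h.1, h.2⟩
      · rintro ⟨rfl | h, hx⟩
        exacts [absurd hc hx, ⟨h, hx⟩]
    · obtain ⟨F, hF, hmem, heq⟩ :=
        ih ⟨s.queue ++ [c], insert c s.marked, s.adopts ++ [(p, c)]⟩
      refine ⟨c :: F, List.nodup_cons.2 ⟨fun h => ((hmem c).1 h).2 (by simp), hF⟩,
        fun x => ?_, ?_⟩
      · simp only [hmem, List.mem_cons, Finset.mem_insert]
        by_cases hxc : x = c
        · simp [hxc, hc]
        · simp [hxc]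
      · simp only [enq, List.foldl_cons, if_neg hc] at heq ⊢
        rw [heq]
        simp

end AdoptionRecords

section Invariant

variable {V : Type} [DecidableEq V] (T : PreTree V) (EL : List (V × V))

def candidates (u : V) : List V :=
  T.children (some u) ++ (EL.filter fun e => decide (e.1 = u)).map Prod.snd

/-- `visited` lists the dequeued nodes in order; positions in `s.adopts.map Prod.snd` serve as
adoption times. -/
structure RunInv (s : BFSState V) (visited : List V) : Prop where
  visited_append_queue : visited ++ s.queue = s.adopts.map Prod.snd
  nodup : (s.adopts.map Prod.snd).Nodup
  mem_marked : ∀ v, v ∈ s.marked ↔ v ∈ s.adopts.map Prod.snd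
  parent_mem_visited : ∀ {p v}, (some p, v) ∈ s.adopts → p ∈ visited
  candidates_marked : ∀ u ∈ visited, ∀ v ∈ candidates T EL u, v ∈ s.marked
  mem_candidates : ∀ {p v}, (some p, v) ∈ s.adopts → v ∈ candidates T EL p
  idxOf_parent_lt : ∀ {p v}, (some p, v) ∈ s.adopts →
    (s.adopts.map Prod.snd).idxOf p < (s.adopts.map Prod.snd).idxOf v
  idxOf_parent_le : ∀ u ∈ visited, ∀ {q v}, (some q, v) ∈ s.adopts →
    v ∈ candidates T EL u → (s.adopts.map Prod.snd).idxOf q ≤ (s.adopts.map Prod.snd).idxOf u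

variable {T EL}

theorem RunInv.idxOf_parent_le_process {s : BFSState V} {visited : List V} {u : V}
    {rest F : List V} (hI : RunInv T EL s visited) (hq : s.queue = u :: rest)
    (hFmem : ∀ x, x ∈ F ↔ x ∈ candidates T EL u ∧ x ∉ s.marked) :
    ∀ w ∈ visited ++ [u], ∀ {q v}, (some q, v) ∈ s.adopts ++ F.map (some u, ·) →
      v ∈ candidates T EL w → ((s.adopts ++ F.map (some u, ·)).map Prod.snd).idxOf q ≤
        ((s.adopts ++ F.map (some u, ·)).map Prod.snd).idxOf w := by
  have hLq : visited ++ u :: rest = s.adopts.map Prod.snd := hq ▸ hI.visited_append_queue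
  have hidx : ∀ x ∈ visited ++ [u], ((s.adopts ++ F.map (some u, ·)).map Prod.snd).idxOf x =
      (s.adopts.map Prod.snd).idxOf x := fun x hx => by
    rw [List.map_append, List.idxOf_append_of_mem (hLq ▸ by simp at hx ⊢; tauto)]
  intro w hw q v h hv
  rcases mem_append_map_some_iff.1 h with h | ⟨rfl, hvF⟩
  · have hqvis := hI.parent_mem_visited h
    rw [hidx q (List.mem_append_left _ hqvis), hidx w hw]
    rcases List.mem_append.1 hw with hw | hw
    · exact hI.idxOf_parent_le w hw h hv
    · obtain rfl : w = u := by simpa using hw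
      rw [← hLq]
      exact (idxOf_lt_idxOf_of_nodup_append (hLq ▸ hI.nodup) hqvis (by simp)).le
  · rcases List.mem_append.1 hw with hw | hw
    · exact absurd (hI.candidates_marked w hw v hv) ((hFmem v).1 hvF).2
    · obtain rfl : w = q := by simpa using hw
      exact le_rfl

theorem RunInv.process {s : BFSState V} {visited : List V} {u : V} {rest F : List V}
    (hI : RunInv T EL s visited) (hq : s.queue = u :: rest) (hF : F.Nodup)
    (hFmem : ∀ x, x ∈ F ↔ x ∈ candidates T EL u ∧ x ∉ s.marked) :
    RunInv T EL ⟨rest ++ F, s.marked ∪ F.toFinset, s.adopts ++ F.map (some u, ·)⟩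
      (visited ++ [u]) := by
  set L := s.adopts.map Prod.snd
  have hLq : visited ++ u :: rest = L := hq ▸ hI.visited_append_queue
  have hL : (s.adopts ++ F.map (some u, ·)).map Prod.snd = L ++ F := by simp [L]
  have hFL : ∀ x ∈ F, x ∉ L := fun x hx hxL => ((hFmem x).1 hx).2 ((hI.mem_marked x).2 hxL)
  have hnodup : (L ++ F).Nodup := hI.nodup.append hF fun a ha haF => hFL a haF ha
  have hvisL : ∀ x ∈ visited, x ∈ L := fun x hx => hLq ▸ List.mem_append_left _ hx
  have huL : u ∈ L := hLq ▸ by simp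
  have hidx : ∀ x ∈ L, (L ++ F).idxOf x = L.idxOf x := fun x hx => List.idxOf_append_of_mem hx
  refine ⟨by rw [hL, ← hLq]; simp, hL ▸ hnodup, fun v => ?_, ?_, ?_, ?_, ?_,
    hI.idxOf_parent_le_process hq hFmem⟩
  · simp only [hL, Finset.mem_union, List.mem_toFinset, List.mem_append, hI.mem_marked, L]
  · intro p v h
    rcases mem_append_map_some_iff.1 h with h | ⟨rfl, -⟩
    exacts [List.mem_append_left _ (hI.parent_mem_visited h), by simp]
  · intro w hw v hv
    rcases List.mem_append.1 hw with hw | hw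
    · exact Finset.mem_union_left _ (hI.candidates_marked w hw v hv)
    · obtain rfl : w = u := by simpa using hw
      by_cases hvm : v ∈ s.marked
      · exact Finset.mem_union_left _ hvm
      · exact Finset.mem_union_right _ (List.mem_toFinset.2 ((hFmem v).2 ⟨hv, hvm⟩))
  · intro p v h
    rcases mem_append_map_some_iff.1 h with h | ⟨rfl, hv⟩
    exacts [hI.mem_candidates h, ((hFmem v).1 hv).1]
  · intro p v h
    rw [hL]
    rcases mem_append_map_some_iff.1 h with h | ⟨rfl, hv⟩
    · rw [hidx p (hvisL p (hI.parent_mem_visited h)), hidx v (List.mem_map_of_mem h)]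
      exact hI.idxOf_parent_lt h
    · exact idxOf_lt_idxOf_of_nodup_append hnodup huL hv

theorem RunInv.startPhase {s : BFSState V} {visited : List V} {c : V}
    (hI : RunInv T EL s visited) (hq : s.queue = []) (hc : c ∉ s.marked) :
    RunInv T EL ⟨[c], insert c s.marked, s.adopts ++ [(none, c)]⟩ visited := by
  set L := s.adopts.map Prod.snd
  have hL : (s.adopts ++ [(none, c)]).map Prod.snd = L ++ [c] := by simp [L]
  have hcL : c ∉ L := fun h => hc ((hI.mem_marked c).2 h)
  have hvisL : visited = L := by simpa [hq] using hI.visited_append_queue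
  have hidx : ∀ x ∈ L, (L ++ [c]).idxOf x = L.idxOf x := fun x hx => List.idxOf_append_of_mem hx
  have hmem : ∀ {p v}, (some p, v) ∈ s.adopts ++ [(none, c)] ↔ (some p, v) ∈ s.adopts := by
    simp
  refine ⟨by rw [hL, ← hvisL],
    hL ▸ hI.nodup.append (List.nodup_singleton c) (List.disjoint_singleton.2 hcL),
    fun v => ?_, fun h => hI.parent_mem_visited (hmem.1 h),
    fun u hu v hv => Finset.mem_insert_of_mem (hI.candidates_marked u hu v hv),
    fun h => hI.mem_candidates (hmem.1 h), fun h => ?_, fun u hu q v h hv => ?_⟩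
  · simp only [hL, Finset.mem_insert, List.mem_append, List.mem_singleton, hI.mem_marked, L,
      or_comm]
  · rw [hL, hidx _ (hvisL ▸ hI.parent_mem_visited (hmem.1 h)),
      hidx _ (List.mem_map_of_mem (hmem.1 h))]
    exact hI.idxOf_parent_lt (hmem.1 h)
  · rw [hL, hidx _ (hvisL ▸ hI.parent_mem_visited (hmem.1 h)), hidx _ (hvisL ▸ hu)]
    exact hI.idxOf_parent_le u hu (hmem.1 h) hv

theorem RunInv.children_ofAdopts_eq_nil {s : BFSState V} {visited : List V} {u : V}
    (hI : RunInv T EL s visited) (hu : u ∉ visited) :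
    (ofAdopts s.adopts).children (some u) = [] :=
  List.eq_nil_iff_forall_not_mem.2 fun _ h => hu (hI.parent_mem_visited (mem_ofAdopts_children.1 h))

theorem runInv_init : RunInv T EL ⟨[], ∅, []⟩ [] := by
  constructor <;> simp

end Invariant

section Run

variable {V : Type} [Fintype V] [DecidableEq V] {T : PreTree V} {EL : List (V × V)}

variable (T EL) in
theorem imBFS_eq_ofAdopts :
    imBFS T EL = ofAdopts (imBFSAux T EL (2 * Fintype.card V + 1) ⟨[], ∅, []⟩) := rfl

variable (T EL) in
theorem imBFSAux_succ_cases (fuel : ℕ) (s : BFSState V) :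
    (s.queue = [] ∧ (∀ v, v ∈ s.marked) ∧ imBFSAux T EL (fuel + 1) s = s.adopts) ∨
    (∃ u rest, s.queue = u :: rest ∧ imBFSAux T EL (fuel + 1) s =
      imBFSAux T EL fuel (enq (some u) (candidates T EL u) ⟨rest, s.marked, s.adopts⟩)) ∨
    (∃ c, s.queue = [] ∧ c ∉ s.marked ∧ imBFSAux T EL (fuel + 1) s =
      imBFSAux T EL fuel ⟨[c], insert c s.marked, s.adopts ++ [(none, c)]⟩) := by
  obtain ⟨_ | ⟨u, rest⟩, m, ad⟩ := s
  · have hstart : ∀ c, c ∉ m →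
        enq none [c] ⟨[], m, ad⟩ = ⟨[c], insert c m, ad ++ [(none, c)]⟩ :=
      fun c hc => by simp [enq, hc]
    rcases hroot : (T.children none).find? (fun c => decide (c ∉ m)) with _ | c
    · rcases hany : (Finset.univ : Finset V).toList.find? (fun v => decide (v ∉ m)) with _ | c
      · refine Or.inl ⟨rfl, fun v => ?_, by simp only [imBFSAux]; rw [hroot, hany]⟩
        simpa using List.find?_eq_none.1 hany v (by simp)
      · have hc : c ∉ m := by simpa using List.find?_some hany
        refine Or.inr (Or.inr ⟨c, rfl, hc, ?_⟩)
        simp only [imBFSAux]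
        rw [hroot, hany]
        exact congrArg _ (hstart c hc)
    · have hc : c ∉ m := by simpa using List.find?_some hroot
      refine Or.inr (Or.inr ⟨c, rfl, hc, ?_⟩)
      simp only [imBFSAux]
      rw [hroot]
      exact congrArg _ (hstart c hc)
  · exact Or.inr (Or.inl ⟨u, rest, rfl, rfl⟩)

variable (T EL) in
abbrev IsCompleteRun (A : List (Option V × V)) : Prop :=
  RunInv T EL ⟨[], Finset.univ, A⟩ (A.map Prod.snd)

theorem RunInv.isCompleteRun {s : BFSState V} {visited : List V} (hI : RunInv T EL s visited)
    (hq : s.queue = []) (hall : ∀ v, v ∈ s.marked) : IsCompleteRun T EL s.adopts := by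
  obtain ⟨q, m, ad⟩ := s
  obtain rfl : q = [] := hq
  obtain rfl : m = Finset.univ := Finset.eq_univ_iff_forall.2 hall
  obtain rfl : visited = ad.map Prod.snd := by simpa using hI.visited_append_queue
  exact hI

theorem card_compl_union_toFinset {m : Finset V} {F : List V} (hF : F.Nodup)
    (hFm : ∀ x ∈ F, x ∉ m) : (m ∪ F.toFinset)ᶜ.card + F.length = mᶜ.card := by
  have hdisj : Disjoint m F.toFinset :=
    Finset.disjoint_right.2 fun x hx => hFm x (List.mem_toFinset.1 hx)
  have hle := Finset.card_le_univ (m ∪ F.toFinset)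
  rw [Finset.card_union_of_disjoint hdisj, List.toFinset_card_of_nodup hF] at hle
  rw [Finset.card_compl, Finset.card_compl, Finset.card_union_of_disjoint hdisj,
    List.toFinset_card_of_nodup hF]
  omega

/-- Each step lowers `s.queue.length + 2 * s.markedᶜ.card` by at least one. -/
theorem imBFSAux_induction (P : BFSState V → List V → List (Option V × V) → Prop)
    (terminal : ∀ s visited, RunInv T EL s visited → s.queue = [] →
      (∀ v, v ∈ s.marked) → P s visited s.adopts)
    (process : ∀ s visited u rest F A, RunInv T EL s visited → s.queue = u :: rest →
      F.Nodup → (∀ x, x ∈ F ↔ x ∈ candidates T EL u ∧ x ∉ s.marked) →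
      P ⟨rest ++ F, s.marked ∪ F.toFinset, s.adopts ++ F.map (some u, ·)⟩ (visited ++ [u])
        A → P s visited A)
    (startPhase : ∀ s visited c A, RunInv T EL s visited → s.queue = [] → c ∉ s.marked →
      P ⟨[c], insert c s.marked, s.adopts ++ [(none, c)]⟩ visited A → P s visited A)
    (fuel : ℕ) (s : BFSState V) (visited : List V) (hI : RunInv T EL s visited)
    (hfuel : s.queue.length + 2 * s.markedᶜ.card ≤ fuel) :
    P s visited (imBFSAux T EL fuel s) := by
  induction fuel generalizing s visited with
  | zero =>
    have hq : s.queue = [] := List.eq_nil_of_length_eq_zero (by omega)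
    have hall : ∀ v, v ∈ s.marked := by
      simpa [Finset.card_eq_zero, Finset.compl_eq_empty_iff, Finset.eq_univ_iff_forall]
        using (show s.markedᶜ.card = 0 by omega)
    exact terminal s visited hI hq hall
  | succ fuel ih =>
    rcases imBFSAux_succ_cases T EL fuel s with
      ⟨hq, hall, h⟩ | ⟨u, rest, hq, h⟩ | ⟨c, hq, hc, h⟩
    · exact h ▸ terminal s visited hI hq hall
    · obtain ⟨F, hF, hFmem, henq⟩ := exists_enq_eq (some u) (candidates T EL u)
        ⟨rest, s.marked, s.adopts⟩
      rw [h, henq]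
      have hcard : (s.marked ∪ F.toFinset)ᶜ.card + F.length = s.markedᶜ.card :=
        card_compl_union_toFinset hF fun x hx => ((hFmem x).1 hx).2
      refine process s visited u rest F _ hI hq hF hFmem
        (ih _ _ (hI.process hq hF hFmem) ?_)
      simp only [hq, List.length_cons, List.length_append] at hfuel ⊢
      omega
    · rw [h]
      have hcard : (insert c s.marked)ᶜ.card + 1 = s.markedᶜ.card := by
        rw [Finset.card_compl, Finset.card_compl, Finset.card_insert_of_notMem hc]
        have := Finset.card_le_univ (insert c s.marked)
        rw [Finset.card_insert_of_notMem hc] at this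
        omega
      refine startPhase s visited c _ hI hq hc (ih _ _ (hI.startPhase hq hc) ?_)
      simp only [hq, List.length_nil, List.length_singleton] at hfuel ⊢
      omega

theorem isCompleteRun_imBFSAux {fuel : ℕ} {s : BFSState V} {visited : List V}
    (hI : RunInv T EL s visited) (hfuel : s.queue.length + 2 * s.markedᶜ.card ≤ fuel) :
    IsCompleteRun T EL (imBFSAux T EL fuel s) :=
  imBFSAux_induction (fun _ _ A => IsCompleteRun T EL A)
    (fun _ _ hI hq hall => hI.isCompleteRun hq hall) (fun _ _ _ _ _ _ _ _ _ _ h => h)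
    (fun _ _ _ _ _ _ _ h => h) fuel s visited hI hfuel

def rootPhases (A : List (Option V × V)) (m : Finset V) : List V :=
  (((ofAdopts A).children none).filter fun c => decide (c ∉ m)).flatMap fun c =>
    levels (ofAdopts A) (Fintype.card V + 1) [c]

/-- The run from `s` adopts, after the records so far, the rest of the current phase in level
order and then the phases of the root children not yet marked. -/
def RunListing (A : List (Option V × V)) (s : BFSState V) : Prop :=
  A.map Prod.snd = s.adopts.map Prod.snd ++
    levels (ofAdopts A) (Fintype.card V + 1) (expand (ofAdopts A) s.queue) ++ rootPhases A s.marked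

theorem IsCompleteRun.iterate_expand_card_eq_nil {A : List (Option V × V)}
    (hA : IsCompleteRun T EL A) (Q : List V) :
    (expand (ofAdopts A))^[Fintype.card V] Q = [] :=
  iterate_expand_eq_nil _ (fun v => (A.map Prod.snd).idxOf v) _
    (fun _ _ h => hA.idxOf_parent_lt (mem_ofAdopts_children.1 h))
    (fun v => (List.idxOf_lt_length_iff.2 ((hA.mem_marked v).1 (Finset.mem_univ v))).trans_le
      hA.nodup.length_le_card) Q

theorem RunInv.children_ofAdopts_eq {s : BFSState V} {visited : List V} {u : V}
    {A : List (Option V × V)} (hI : RunInv T EL s visited) (hA : IsCompleteRun T EL A)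
    (hpre : s.adopts <+: A) (hu : u ∈ visited) :
    (ofAdopts A).children (some u) = (ofAdopts s.adopts).children (some u) := by
  obtain ⟨t, rfl⟩ := hpre
  rw [ofAdopts_children_append, List.append_right_eq_self, List.eq_nil_iff_forall_not_mem]
  intro v hv
  have hvt := mem_ofAdopts_children.1 hv
  have hvs := (hI.mem_marked v).1 (hI.candidates_marked u hu v
    (hA.mem_candidates (List.mem_append_right _ hvt)))
  have hnodup := hA.nodup
  rw [List.map_append] at hnodup
  exact List.disjoint_of_nodup_append hnodup hvs (List.mem_map_of_mem hvt)

theorem runListing_of_terminal {s : BFSState V} (hq : s.queue = []) (hall : ∀ v, v ∈ s.marked) :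
    RunListing s.adopts s := by
  unfold RunListing rootPhases
  rw [hq, List.filter_eq_nil_iff.2 fun c _ => by simp [hall c]]
  simp [expand, levels_nil]

theorem RunListing.of_process {s : BFSState V} {visited : List V} {u : V} {rest F : List V}
    {A : List (Option V × V)} (hI : RunInv T EL s visited) (hq : s.queue = u :: rest)
    (hF : F.Nodup) (hFmem : ∀ x, x ∈ F ↔ x ∈ candidates T EL u ∧ x ∉ s.marked)
    (hA : IsCompleteRun T EL A) (hpre : s.adopts ++ F.map (some u, ·) <+: A)
    (hL : RunListing A ⟨rest ++ F, s.marked ∪ F.toFinset, s.adopts ++ F.map (some u, ·)⟩) :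
    RunListing A s := by
  have hu : u ∉ visited := by
    have := hI.visited_append_queue ▸ hI.nodup
    rw [hq] at this
    exact fun h => List.disjoint_of_nodup_append this h (by simp)
  have hchildren : (ofAdopts A).children (some u) = F := by
    rw [(hI.process hq hF hFmem).children_ofAdopts_eq hA hpre (by simp),
      ofAdopts_children_append, hI.children_ofAdopts_eq_nil hu]
    simp [ofAdopts, List.filter_map, Function.comp_def]
  have hroots : rootPhases A (s.marked ∪ F.toFinset) = rootPhases A s.marked := by
    unfold rootPhases
    congr 1
    refine List.filter_congr fun c hc => ?_
    have hcF : c ∉ F := fun hcF => by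
      have hu' := mem_ofAdopts_children.1 (hchildren ▸ hcF : c ∈ (ofAdopts A).children (some u))
      simpa using List.inj_on_of_nodup_map hA.nodup (mem_ofAdopts_children.1 hc) hu' rfl
    simp [hcF]
  unfold RunListing at hL ⊢
  rw [hL, hroots, hq, expand_cons, hchildren,
    levels_append_of_iterate_eq_nil _ _ _ _ (hA.iterate_expand_card_eq_nil F), expand_append]
  simp

theorem RunInv.filter_root_children_eq_cons {s : BFSState V} {visited : List V} {c : V}
    {A : List (Option V × V)} (hI : RunInv T EL s visited) (hc : c ∉ s.marked)
    (hA : IsCompleteRun T EL A) (hpre : s.adopts ++ [(none, c)] <+: A) :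
    ((ofAdopts A).children none).filter (fun x => decide (x ∉ s.marked)) =
      c :: ((ofAdopts A).children none).filter (fun x => decide (x ∉ insert c s.marked)) := by
  obtain ⟨t, ht⟩ := hpre
  have hfresh : ∀ x ∈ (ofAdopts t).children none, x ∉ s.marked ∧ x ≠ c := by
    intro x hx
    have hnodup := hA.nodup
    rw [← ht, List.map_append, List.map_append] at hnodup
    have hxt := List.mem_map_of_mem (f := Prod.snd) (mem_ofAdopts_children.1 hx)
    have hdisj := List.disjoint_of_nodup_append hnodup
    refine ⟨fun hxm => hdisj (List.mem_append_left _ ((hI.mem_marked x).1 hxm)) hxt, ?_⟩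
    rintro rfl
    exact hdisj (List.mem_append_right _ (by simp)) hxt
  have hold : ∀ x ∈ (ofAdopts s.adopts).children none, x ∈ s.marked := fun x hx =>
    (hI.mem_marked x).2 (List.mem_map_of_mem (f := Prod.snd) (mem_ofAdopts_children.1 hx))
  have hold₁ :
      ((ofAdopts s.adopts).children none).filter (fun x => decide (x ∉ s.marked)) = [] :=
    List.filter_eq_nil_iff.2 fun x hx => by simp [hold x hx]
  have hold₂ : ((ofAdopts s.adopts).children none).filter
      (fun x => decide (x ∉ insert c s.marked)) = [] :=
    List.filter_eq_nil_iff.2 fun x hx => by simp [hold x hx]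
  have hnew : ((ofAdopts t).children none).filter (fun x => decide (x ∉ s.marked)) =
      ((ofAdopts t).children none).filter (fun x => decide (x ∉ insert c s.marked)) :=
    List.filter_congr fun x hx => by simp [(hfresh x hx).1, (hfresh x hx).2]
  have hsingle : (ofAdopts [((none : Option V), c)]).children none = [c] := by simp [ofAdopts]
  rw [← ht, ofAdopts_children_append, ofAdopts_children_append, hsingle, List.filter_append,
    List.filter_append, List.filter_append, List.filter_append, hold₁, hold₂, hnew]
  simp [hc]

theorem RunListing.of_startPhase {s : BFSState V} {visited : List V} {c : V}
    {A : List (Option V × V)} (hI : RunInv T EL s visited) (hq : s.queue = [])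
    (hc : c ∉ s.marked) (hA : IsCompleteRun T EL A) (hpre : s.adopts ++ [(none, c)] <+: A)
    (hL : RunListing A ⟨[c], insert c s.marked, s.adopts ++ [(none, c)]⟩) :
    RunListing A s := by
  unfold RunListing at hL ⊢
  rw [hL, hq]
  unfold rootPhases
  rw [hI.filter_root_children_eq_cons hc hA hpre, List.flatMap_cons, ← List.append_nil [c],
    levels_append_of_iterate_eq_nil _ _ _ _ (hA.iterate_expand_card_eq_nil [c])]
  simp [expand, levels_nil]

theorem runListing_imBFSAux {fuel : ℕ} {s : BFSState V} {visited : List V}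
    (hI : RunInv T EL s visited) (hfuel : s.queue.length + 2 * s.markedᶜ.card ≤ fuel) :
    RunListing (imBFSAux T EL fuel s) s := by
  refine (imBFSAux_induction
    (fun s _ A => IsCompleteRun T EL A → s.adopts <+: A ∧ RunListing A s)
    (fun _ _ _ hq hall _ => ⟨List.prefix_refl _, runListing_of_terminal hq hall⟩)
    (fun _ _ _ _ _ _ hI hq hF hFmem ih hA =>
      have ⟨hpre, hL⟩ := ih hA
      ⟨(List.prefix_append _ _).trans hpre, hL.of_process hI hq hF hFmem hA hpre⟩)
    (fun _ _ _ _ hI hq hc ih hA =>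
      have ⟨hpre, hL⟩ := ih hA
      ⟨(List.prefix_append _ _).trans hpre, hL.of_startPhase hI hq hc hA hpre⟩)
    fuel s visited hI hfuel (isCompleteRun_imBFSAux hI hfuel)).2

theorem bfoList_imBFS :
    bfoList (imBFS T EL) =
      (imBFSAux T EL (2 * Fintype.card V + 1) ⟨[], ∅, []⟩).map Prod.snd := by
  rw [runListing_imBFSAux runInv_init (by simp), imBFS_eq_ofAdopts]
  simp [rootPhases, bfoList, levels, expand, iterate_expand_nil]

theorem mem_candidates_iff (hT : ∀ w v, v ∈ T.children w ↔ T.parent v = w) {u v : V} :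
    v ∈ candidates T EL u ↔ (u, v) ∈ treeEdges T ∪ EL.toFinset := by
  simp [candidates, treeEdges, hT]

end Run

namespace IsCompleteRun

variable {V : Type} [Fintype V] [DecidableEq V] {T : PreTree V} {EL : List (V × V)}
  {A : List (Option V × V)}

theorem parent_eq_iff (hA : IsCompleteRun T EL A) {p : Option V} {v : V} :
    (ofAdopts A).parent v = p ↔ (p, v) ∈ A := by
  obtain ⟨⟨p', v'⟩, hmem, rfl⟩ := List.mem_map.1 ((hA.mem_marked v).1 (Finset.mem_univ v))
  rw [ofAdopts_parent_of_mem hA.nodup hmem]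
  exact ⟨(· ▸ hmem),
    fun h => congrArg Prod.fst (List.inj_on_of_nodup_map hA.nodup hmem h rfl)⟩

theorem isOST (hT : ∀ w v, v ∈ T.children w ↔ T.parent v = w) (hA : IsCompleteRun T EL A) :
    IsOST (treeEdges T ∪ EL.toFinset) (ofAdopts A) :=
  ⟨exists_iterate_parentStep_eq_none _ (fun v => (A.map Prod.snd).idxOf v)
      fun _ _ h => hA.idxOf_parent_lt (hA.parent_eq_iff.1 h),
    fun _ _ h => (mem_candidates_iff hT).1 (hA.mem_candidates (hA.parent_eq_iff.1 h)),
    fun _ => (List.Sublist.map Prod.snd List.filter_sublist).nodup hA.nodup,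
    fun _ _ => mem_ofAdopts_children.trans hA.parent_eq_iff.symm⟩

theorem isBFSTree (hT : ∀ w v, v ∈ T.children w ↔ T.parent v = w) (hA : IsCompleteRun T EL A)
    (hbfo : bfoList (ofAdopts A) = A.map Prod.snd) :
    IsBFSTree (treeEdges T ∪ EL.toFinset) (ofAdopts A) := by
  refine ⟨hA.isOST hT, fun ⟨u, v⟩ he ⟨_, hne, hlt⟩ => ?_⟩
  obtain ⟨q, hq⟩ := Option.ne_none_iff_exists'.1 hne
  have hle := hA.idxOf_parent_le u ((hA.mem_marked u).1 (Finset.mem_univ u))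
    (hA.parent_eq_iff.1 hq) ((mem_candidates_iff hT).2 he)
  simp only [hq, bfoOpt, bfo, hbfo] at hle hlt
  omega

end IsCompleteRun

theorem stmt4_general {V : Type} [Fintype V] [DecidableEq V]
    (E : Finset (V × V))
    (T : PreTree V) (hT : IsOST E T)
    (EL : List (V × V)) :
    IsBFSTree (treeEdges T ∪ EL.toFinset) (imBFS T EL) :=
  (isCompleteRun_imBFSAux runInv_init (by simp)).isBFSTree hT.2.2.2 bfoList_imBFS

theorem stmt4 {V : Type} [Fintype V] [DecidableEq V]
    (hV : 1 ≤ Fintype.card V) (E : Finset (V × V))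
    (hE : ∀ e ∈ E, e.1 ≠ e.2)
    (T : PreTree V) (hT : IsOST E T)
    (EL : List (V × V)) (hEL : ∀ e ∈ EL, e ∈ E) :
    IsBFSTree (treeEdges T ∪ EL.toFinset) (imBFS T EL) :=
  stmt4_general E T hT EL

end BFSFormal
end

section
/- Let u ∈ V be a node of in-degree 0 in G (no edge of E ends at u), let G − u denote the subgraph of G induced on V ∖ {u}, and let T′ be a BFS-tree of G − u. Then the ordered spanning tree of G obtained from T′ by adding u as the rightmost child of r — that is, with parent r and placed last in the sibling order of the children of r — is a BFS-tree of G. -/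
namespace BFSFormal

variable {V : Type} [Fintype V] [DecidableEq V]

/-!
Since `u` is the last child of `r` and has no children, the breadth-first listing of the
extended tree is that of `T'` followed by `u`; in particular the breadth-first order of every
other node is unchanged. An edge of `G` cannot end at `u`, so it either starts at `u`, and then
its head comes before `u` and it is not V-BFS, or it is an edge of `G − u`, whose V-BFS status
is the same in both trees.
-/

section OrderedTree

variable {V : Type} {T : PreTree V}

lemma iterate_parentStep_none (k : ℕ) : (parentStep T)^[k] none = none :=
  Function.iterate_fixed rfl k

lemma mem_iterate_expand_iff
    (hchild : ∀ (w : Option V) (v : V), v ∈ T.children w ↔ T.parent v = w)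
    (k : ℕ) (L : List V) (v : V) :
    v ∈ (expand T)^[k] L ↔ ∃ w ∈ L, (parentStep T)^[k] (some v) = some w := by
  induction k generalizing v with
  | zero => simp
  | succ k ih =>
    rw [Function.iterate_succ_apply', Function.iterate_succ_apply]
    simp only [expand, List.mem_flatMap, hchild]
    constructor
    · rintro ⟨w, hw, hvw⟩
      simpa [parentStep, hvw] using (ih w).mp hw
    · rintro ⟨z, hz, hvz⟩
      rcases hp : T.parent v with _ | w
      · simp [parentStep, hp, iterate_parentStep_none] at hvz
      · exact ⟨w, (ih w).mpr ⟨z, hz, by simpa [parentStep, hp] using hvz⟩, rfl⟩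

variable [Fintype V]

/-- Before the parent chain of `v` reaches `r` its states are pairwise distinct, so it visits
fewer than `card V` nodes of `V`. This depth bound is what makes the truncation of `bfoList`
to `card V + 1` levels harmless. -/
lemma lt_card_of_iterate_parentStep_eq_some
    (hreach : ∀ v : V, ∃ k, (parentStep T)^[k] (some v) = none)
    {k : ℕ} {v c : V} (h : (parentStep T)^[k] (some v) = some c) :
    k < Fintype.card V := by
  classical
  set f := parentStep T
  have hex := hreach v
  set m := Nat.find hex
  have hm : f^[m] (some v) = none := Nat.find_spec hex
  have hkm : k < m := by
    by_contra! hmk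
    rw [← Nat.sub_add_cancel hmk, Function.iterate_add_apply, hm,
      iterate_parentStep_none] at h
    exact absurd h (by simp)
  have hne : ∀ i j : Fin (m + 1), i < j → f^[i] (some v) ≠ f^[j] (some v) := by
    intro i j hij heq
    have hjm : (j : ℕ) ≤ m := Nat.lt_succ_iff.mp j.2
    refine Nat.find_min hex (show m - j + i < m by omega) ?_
    rw [Function.iterate_add_apply, heq, ← Function.iterate_add_apply,
      Nat.sub_add_cancel hjm, hm]
  have hinj : Function.Injective fun i : Fin (m + 1) => f^[i] (some v) := by
    intro i j hij
    by_contra hne'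
    rcases lt_or_gt_of_ne hne' with hlt | hlt
    · exact hne i j hlt hij
    · exact hne j i hlt hij.symm
  have := Fintype.card_le_of_injective _ hinj
  rw [Fintype.card_fin, Fintype.card_option] at this
  omega

lemma iterate_expand_singleton_eq_nil
    (hchild : ∀ (w : Option V) (v : V), v ∈ T.children w ↔ T.parent v = w)
    (hreach : ∀ v : V, ∃ k, (parentStep T)^[k] (some v) = none)
    (c : V) {k : ℕ} (hk : Fintype.card V ≤ k) :
    (expand T)^[k] [c] = [] := by
  refine List.eq_nil_iff_forall_not_mem.mpr fun v hv => ?_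
  obtain ⟨w, -, h⟩ := (mem_iterate_expand_iff hchild k [c] v).mp hv
  exact absurd (lt_card_of_iterate_parentStep_eq_some hreach h) (by omega)

lemma mem_bfoList
    (hchild : ∀ (w : Option V) (v : V), v ∈ T.children w ↔ T.parent v = w)
    (hreach : ∀ v : V, ∃ k, (parentStep T)^[k] (some v) = none) (x : V) :
    x ∈ bfoList T := by
  classical
  have hex := hreach x
  have hm : (parentStep T)^[Nat.find hex] (some x) = none := Nat.find_spec hex
  obtain ⟨k, hk⟩ : ∃ k, Nat.find hex = k + 1 :=
    Nat.exists_eq_succ_of_ne_zero fun h => by simp [h] at hm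
  obtain ⟨c, hc⟩ :=
    Option.ne_none_iff_exists'.mp (Nat.find_min hex (show k < Nat.find hex by omega))
  have hpc : T.parent c = none := by
    rwa [hk, Function.iterate_succ_apply', hc] at hm
  simp only [bfoList, List.mem_flatMap, List.mem_range]
  exact ⟨c, (hchild none c).mpr hpc, k,
    Nat.lt_succ_of_lt (lt_card_of_iterate_parentStep_eq_some hreach hc),
    (mem_iterate_expand_iff hchild k [c] x).mpr ⟨c, List.mem_singleton_self c, hc⟩⟩

end OrderedTree

lemma idxOf_map_of_injective {α β : Type} [DecidableEq α] [DecidableEq β] {f : α → β}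
    (hf : Function.Injective f) (l : List α) (a : α) :
    (l.map f).idxOf (f a) = l.idxOf a := by
  induction l with
  | nil => rfl
  | cons x xs ih =>
    by_cases h : x = a
    · subst h; simp
    · rw [List.map_cons, List.idxOf_cons_ne _ (hf.ne h), List.idxOf_cons_ne _ h, ih]

section ExtendRight

variable {V : Type} [DecidableEq V] {u : V} (T' : PreTree {v : V // v ≠ u})

@[simp]
lemma extendRight_parent_self : (extendRight u T').parent u = none := dif_pos rfl

@[simp]
lemma extendRight_parent_val (x : {v : V // v ≠ u}) :
    (extendRight u T').parent x = (T'.parent x).map Subtype.val := dif_neg x.2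

@[simp]
lemma extendRight_children_none :
    (extendRight u T').children none = (T'.children none).map Subtype.val ++ [u] := rfl

@[simp]
lemma extendRight_children_self : (extendRight u T').children (some u) = [] := by
  simp [extendRight]

@[simp]
lemma extendRight_children_val (x : {v : V // v ≠ u}) :
    (extendRight u T').children (some x) = (T'.children (some x)).map Subtype.val :=
  dif_neg x.2

lemma iterate_parentStep_extendRight (k : ℕ) (o : Option {v : V // v ≠ u}) :
    (parentStep (extendRight u T'))^[k] (o.map Subtype.val)
      = ((parentStep T')^[k] o).map Subtype.val := by
  induction k generalizing o with
  | zero => rfl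
  | succ k ih =>
    rw [Function.iterate_succ_apply, Function.iterate_succ_apply, ← ih]
    rcases o with _ | x <;> simp [parentStep]

lemma expand_extendRight (L : List {v : V // v ≠ u}) :
    expand (extendRight u T') (L.map Subtype.val) = (expand T' L).map Subtype.val := by
  simp only [expand, List.flatMap_map, List.map_flatMap, extendRight_children_val]

lemma iterate_expand_extendRight (k : ℕ) (L : List {v : V // v ≠ u}) :
    (expand (extendRight u T'))^[k] (L.map Subtype.val)
      = ((expand T')^[k] L).map Subtype.val := by
  induction k generalizing L with
  | zero => rfl
  | succ k ih =>
    rw [Function.iterate_succ_apply, Function.iterate_succ_apply, expand_extendRight, ih]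

lemma iterate_expand_extendRight_self {k : ℕ} (hk : k ≠ 0) :
    (expand (extendRight u T'))^[k] [u] = [] := by
  obtain ⟨j, rfl⟩ := Nat.exists_eq_succ_of_ne_zero hk
  rw [Function.iterate_succ_apply, show expand (extendRight u T') [u] = [] by simp [expand]]
  exact Function.iterate_fixed (by simp [expand]) j

lemma isOST_extendRight [Fintype V] {E : Finset (V × V)} (hT' : IsOST (Esub E u) T') :
    IsOST E (extendRight u T') := by
  obtain ⟨hreach, hedge, hnodup, hchild⟩ := hT'
  refine ⟨fun v => ?_, fun v w hvw => ?_, fun w => ?_, fun w v => ?_⟩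
  · by_cases hv : v = u
    · exact ⟨1, by simp [parentStep, hv]⟩
    · lift v to {v : V // v ≠ u} using hv
      obtain ⟨k, hk⟩ := hreach v
      exact ⟨k, by simpa [hk] using iterate_parentStep_extendRight T' k (some v)⟩
  · by_cases hv : v = u
    · simp [hv] at hvw
    · lift v to {v : V // v ≠ u} using hv
      obtain ⟨x, hx, rfl⟩ := Option.map_eq_some_iff.mp ((extendRight_parent_val T' v) ▸ hvw)
      simpa [Esub] using hedge v x hx
  · rcases w with _ | x
    · simpa +contextual [List.nodup_append] using (hnodup none).map Subtype.val_injective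
    · by_cases hx : x = u
      · simp [hx]
      · lift x to {v : V // v ≠ u} using hx
        simpa using (hnodup (some x)).map Subtype.val_injective
  · rcases w with _ | x
    · by_cases hv : v = u
      · simp [hv]
      · lift v to {v : V // v ≠ u} using hv
        simpa only [extendRight_children_none, extendRight_parent_val, List.mem_append,
          List.mem_map_of_injective Subtype.val_injective, List.mem_singleton, v.2, or_false,
          Option.map_eq_none_iff] using hchild none v
    · by_cases hx : x = u
      · subst hx
        by_cases hv : v = x
        · simp [hv]
        · lift v to {v : V // v ≠ x} using hv
          simp only [extendRight_children_self, extendRight_parent_val, List.not_mem_nil,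
            false_iff]
          intro h
          obtain ⟨y, -, hy⟩ := Option.map_eq_some_iff.mp h
          exact y.2 hy
      · lift x to {v : V // v ≠ u} using hx
        by_cases hv : v = u
        · simp [hv]
        · lift v to {v : V // v ≠ u} using hv
          simpa only [extendRight_children_val, extendRight_parent_val, ← Option.mem_def,
            List.mem_map_of_injective Subtype.val_injective,
            Option.mem_map_of_injective Subtype.val_injective] using hchild (some x) v

lemma card_subtype_ne_add_one [Fintype V] (u : V) :
    Fintype.card {v : V // v ≠ u} + 1 = Fintype.card V := by
  have := Fintype.card_pos_iff.mpr ⟨u⟩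
  rw [Fintype.card_subtype_compl, Fintype.card_subtype_eq]
  omega

end ExtendRight

section BFO

variable {V : Type} [Fintype V] [DecidableEq V] {u : V} {T' : PreTree {v : V // v ≠ u}}
  (hreach : ∀ v, ∃ k, (parentStep T')^[k] (some v) = none)
  (hchild : ∀ w v, v ∈ T'.children w ↔ T'.parent v = w)
include hreach hchild

lemma bfoList_extendRight :
    bfoList (extendRight u T') = (bfoList T').map Subtype.val ++ [u] := by
  rw [bfoList, extendRight_children_none, List.flatMap_append, List.flatMap_map, bfoList,
    List.map_flatMap]
  congr 1
  · refine List.flatMap_congr fun c _ => ?_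
    have hlevel (k : ℕ) : (expand (extendRight u T'))^[k] [↑c]
        = ((expand T')^[k] [c]).map Subtype.val := iterate_expand_extendRight T' k [c]
    rw [List.flatMap_congr fun k _ => hlevel k, ← List.map_flatMap, ← card_subtype_ne_add_one u,
      List.range_succ (n := _ + 1), List.flatMap_append, List.flatMap_singleton,
      iterate_expand_singleton_eq_nil hchild hreach c (Nat.le_succ _), List.append_nil]
  · rw [List.flatMap_singleton, List.range_succ_eq_map, List.flatMap_cons, List.flatMap_map,
      List.flatMap_eq_nil_iff.mpr fun k _ => iterate_expand_extendRight_self T' k.succ_ne_zero]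
    rfl

lemma bfo_extendRight_val (x : {v : V // v ≠ u}) : bfo (extendRight u T') x = bfo T' x := by
  rw [bfo, bfo, bfoList_extendRight hreach hchild,
    List.idxOf_append_of_mem (List.mem_map_of_mem (mem_bfoList hchild hreach x)),
    idxOf_map_of_injective Subtype.val_injective]

lemma bfo_val_lt_bfo_extendRight_self (x : {v : V // v ≠ u}) :
    bfo (extendRight u T') x < bfo (extendRight u T') u := by
  have hx := (@List.idxOf_lt_length_iff _ instBEqOfDecidableEq _ _ _).mpr
    (mem_bfoList hchild hreach x)
  rw [bfo_extendRight_val hreach hchild, bfo, bfo, bfoList_extendRight hreach hchild,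
    List.idxOf_append_of_notMem (by simp), List.idxOf_cons_self, List.length_map]
  omega

lemma isVBFS_extendRight_iff (a b : {v : V // v ≠ u}) :
    IsVBFS (extendRight u T') (a, b) ↔ IsVBFS T' (a, b) := by
  rcases hp : T'.parent b with _ | p <;>
    simp [IsVBFS, hp, bfoOpt, bfo_extendRight_val hreach hchild]

end BFO

theorem stmt13_general {V : Type} [Fintype V] [DecidableEq V]
    (E : Finset (V × V))
    (u : V) (hu : ∀ e ∈ E, e.2 ≠ u)
    (T' : PreTree {v : V // v ≠ u}) (hT' : IsBFSTree (Esub E u) T') :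
    IsBFSTree E (extendRight u T') := by
  obtain ⟨hOST, hno⟩ := hT'
  refine ⟨isOST_extendRight T' hOST, ?_⟩
  obtain ⟨hreach, -, -, hchild⟩ := hOST
  rintro ⟨a, b⟩ he hvbfs
  lift b to {v : V // v ≠ u} using hu _ he
  by_cases ha : a = u
  · subst ha
    exact hvbfs.1.not_gt (bfo_val_lt_bfo_extendRight_self hreach hchild b)
  · lift a to {v : V // v ≠ u} using ha
    exact hno (a, b) (by simpa [Esub] using he)
      ((isVBFS_extendRight_iff hreach hchild a b).mp hvbfs)

theorem stmt13 {V : Type} [Fintype V] [DecidableEq V]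
    (hV : 1 ≤ Fintype.card V) (E : Finset (V × V))
    (hE : ∀ e ∈ E, e.1 ≠ e.2)
    (u : V) (hu : ∀ e ∈ E, e.2 ≠ u)
    (T' : PreTree {v : V // v ≠ u}) (hT' : IsBFSTree (Esub E u) T') :
    IsBFSTree E (extendRight u T') :=
  stmt13_general E u hu T' hT'

end BFSFormal
end
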